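/- Fix μ > 0, m > 3/2, β₀, β₁ ∈ ℝ, and δ_N > 0. Let V_N(ξ,τ) = β₀ φ₀(ξ) + β₁ e^{−τ/2} φ₁(ξ). Let Ψ : ℝ × [0,∞) → ℝ be continuous with Ψ(·,τ) integrable for each τ, and suppose there is C_ψ > 0 such that for all τ ≥ 0: ‖Ψ(·,τ)‖_{L²(m)} ≤ C_ψ e^{−τ} and sup_{ξ∈ℝ} |∫_{−∞}^ξ Ψ(y,τ) dy| ≤ C_ψ e^{−τ}. Assume that for all ξ ∈ ℝ and τ ≥ 0, both 1 − (1/(2μ)) ∫_{−∞}^ξ (V_N(y,τ) + Ψ(y,τ)) dy ≥ δ_N and 1 − (1/(2μ)) ∫_{−∞}^ξ V_N(y,τ) dy ≥ δ_N. Define w(ξ,τ) = −2μ ∂_ξ log(1 − (1/(2μ)) ∫_{−∞}^ξ (V_N(y,τ) + Ψ(y,τ)) dy) and w_N(ξ,τ) = −2μ ∂_ξ log(1 − (1/(2μ)) ∫_{−∞}^ξ V_N(y,τ) dy). Then there exists a constant C_φ > 0 such that ‖w(·,τ) − w_N(·,τ)‖_{L²(m)} ≤ C_φ e^{−τ} for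 all τ ≥ 0. -/

import Mathlib

open MeasureTheory

/-- The Gaussian `φ₀(ξ) = (4πμ)^{−1/2} e^{−ξ²/(4μ)}`. -/
noncomputable def phi0 (μ ξ : ℝ) : ℝ :=
  (Real.sqrt (4 * Real.pi * μ))⁻¹ * Real.exp (-ξ ^ 2 / (4 * μ))

/-- The heat-equation representation of the diffusive N-wave:
`V_N(ξ,τ) = β₀ φ₀(ξ) + β₁ e^{−τ/2} φ₁(ξ)`, with `φ₁ = φ₀'`. -/
noncomputable def VN (μ β₀ β₁ ξ τ : ℝ) : ℝ :=
  β₀ * phi0 μ ξ + β₁ * Real.exp (-τ / 2) * deriv (phi0 μ) ξ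

/-- The `L²(m)` norm, `‖f‖_{L²(m)} = (∫ (1+ξ²)^m |f(ξ)|² dξ)^{1/2}`. -/
noncomputable def normL2m (m : ℝ) (f : ℝ → ℝ) : ℝ :=
  Real.sqrt (∫ ξ : ℝ, (1 + ξ ^ 2) ^ m * (f ξ) ^ 2)

/-!
With `F = 1 - (2μ)⁻¹ ∫_{-∞}^ξ (V_N + Ψ)` and `G = 1 - (2μ)⁻¹ ∫_{-∞}^ξ V_N`, the inverse
Cole-Hopf transform gives `w - w_N = (V_N + Ψ)/F - V_N/G`, and `G - F = (2μ)⁻¹ ∫_{-∞}^ξ Ψ`.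
Since `F, G ≥ δ_N`,
`|w - w_N| ≤ |Ψ|/δ_N + |V_N| |G - F|/δ_N² ≤ |Ψ|/δ_N + C e^{-τ} Q`,
where `Q = (|β₀| + |β₁| |ξ|/(2μ)) φ₀` dominates `V_N(·,τ)` for all `τ ≥ 0` and has finite
`L²(m)` norm for every `m` thanks to its Gaussian decay. Taking `L²(m)` norms gives the `e^{-τ}`
rate.
-/

open Real Set Filter Topology Asymptotics

noncomputable def coleHopfDenom (μ : ℝ) (f : ℝ → ℝ) (x : ℝ) : ℝ :=
  1 - 1 / (2 * μ) * ∫ y in Iio x, f y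

noncomputable def coleHopfInv (μ : ℝ) (f : ℝ → ℝ) (ξ : ℝ) : ℝ :=
  -(2 * μ) * deriv (fun x => log (coleHopfDenom μ f x)) ξ

lemma normL2m_nonneg (m : ℝ) (f : ℝ → ℝ) : 0 ≤ normL2m m f := sqrt_nonneg _

lemma continuous_one_add_sq_rpow (m : ℝ) : Continuous fun x : ℝ => (1 + x ^ 2) ^ m :=
  (continuous_const.add (continuous_pow 2)).rpow_const fun x =>
    Or.inl (add_pos_of_pos_of_nonneg one_pos (sq_nonneg x)).ne'

section WeightedNorm

variable {m : ℝ}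

lemma sq_le_two_mul_of_abs_le {u v w a b : ℝ} (h : |u| ≤ a * |v| + b * |w|) :
    u ^ 2 ≤ 2 * (a ^ 2 * v ^ 2 + b ^ 2 * w ^ 2) :=
  calc u ^ 2 = |u| ^ 2 := (sq_abs u).symm
    _ ≤ (a * |v| + b * |w|) ^ 2 := pow_le_pow_left₀ (abs_nonneg u) h 2
    _ ≤ 2 * ((a * |v|) ^ 2 + (b * |w|) ^ 2) := add_sq_le
    _ = 2 * (a ^ 2 * v ^ 2 + b ^ 2 * w ^ 2) := by simp only [mul_pow, sq_abs]

lemma weight_mul_sq_le_of_abs_le {f g h : ℝ → ℝ} {a b : ℝ}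
    (hfgh : ∀ x, |f x| ≤ a * |g x| + b * |h x|) (x : ℝ) :
    (1 + x ^ 2) ^ m * f x ^ 2 ≤
      2 * a ^ 2 * ((1 + x ^ 2) ^ m * g x ^ 2) + 2 * b ^ 2 * ((1 + x ^ 2) ^ m * h x ^ 2) := by
  have hw : 0 ≤ (1 + x ^ 2) ^ m := by positivity
  have := mul_le_mul_of_nonneg_left (sq_le_two_mul_of_abs_le (hfgh x)) hw
  linarith

lemma integrable_weight_mul_sq_of_abs_le {f g h : ℝ → ℝ} {a b : ℝ}
    (hf : AEStronglyMeasurable f) (hg : Integrable fun x => (1 + x ^ 2) ^ m * g x ^ 2)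
    (hh : Integrable fun x => (1 + x ^ 2) ^ m * h x ^ 2)
    (hfgh : ∀ x, |f x| ≤ a * |g x| + b * |h x|) :
    Integrable fun x => (1 + x ^ 2) ^ m * f x ^ 2 := by
  refine Integrable.mono' ((hg.const_mul (2 * a ^ 2)).add (hh.const_mul (2 * b ^ 2)))
    ((continuous_one_add_sq_rpow m).aestronglyMeasurable.mul (hf.pow 2))
    (Eventually.of_forall fun x => ?_)
  rw [norm_of_nonneg (by positivity)]
  exact weight_mul_sq_le_of_abs_le hfgh x

lemma normL2m_le_of_abs_le_of_integrable {f g h : ℝ → ℝ} {a b : ℝ} (ha : 0 ≤ a) (hb : 0 ≤ b)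
    (hg : Integrable fun x => (1 + x ^ 2) ^ m * g x ^ 2)
    (hh : Integrable fun x => (1 + x ^ 2) ^ m * h x ^ 2)
    (hfgh : ∀ x, |f x| ≤ a * |g x| + b * |h x|) :
    normL2m m f ≤ √2 * (a * normL2m m g + b * normL2m m h) := by
  set Ig := ∫ x, (1 + x ^ 2) ^ m * g x ^ 2
  set Ih := ∫ x, (1 + x ^ 2) ^ m * h x ^ 2
  have hIg : 0 ≤ Ig := integral_nonneg fun x => by positivity
  have hIh : 0 ≤ Ih := integral_nonneg fun x => by positivity
  have hmono : ∫ x, (1 + x ^ 2) ^ m * f x ^ 2 ≤ 2 * a ^ 2 * Ig + 2 * b ^ 2 * Ih := by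
    rw [← integral_const_mul, ← integral_const_mul,
      ← integral_add (hg.const_mul _) (hh.const_mul _)]
    exact integral_mono_of_nonneg (Eventually.of_forall fun x => by positivity)
      ((hg.const_mul _).add (hh.const_mul _))
      (Eventually.of_forall (weight_mul_sq_le_of_abs_le hfgh))
  have hnorm : 0 ≤ a * normL2m m g + b * normL2m m h :=
    add_nonneg (mul_nonneg ha (normL2m_nonneg m g)) (mul_nonneg hb (normL2m_nonneg m h))
  refine (sqrt_le_sqrt hmono).trans ((sqrt_le_left (by positivity)).2 ?_)
  calc 2 * a ^ 2 * Ig + 2 * b ^ 2 * Ih = 2 * ((a * √Ig) ^ 2 + (b * √Ih) ^ 2) := by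
        rw [mul_pow, mul_pow, sq_sqrt hIg, sq_sqrt hIh]; ring
    _ ≤ 2 * (a * √Ig + b * √Ih) ^ 2 := by
        have : 0 ≤ a * √Ig * (b * √Ih) := by positivity
        nlinarith
    _ = (√2 * (a * normL2m m g + b * normL2m m h)) ^ 2 := by
        rw [mul_pow, sq_sqrt zero_le_two]; rfl

/-- The reverse bound `hgfh` excludes the junk case where `g` has infinite weighted norm,
so that `normL2m m g = 0`, while `f` has finite weighted norm. -/
lemma normL2m_le_of_abs_le {f g h : ℝ → ℝ} {a b a' b' : ℝ} (ha : 0 ≤ a) (hb : 0 ≤ b)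
    (hg : AEStronglyMeasurable g) (hh : Integrable fun x => (1 + x ^ 2) ^ m * h x ^ 2)
    (hfgh : ∀ x, |f x| ≤ a * |g x| + b * |h x|) (hgfh : ∀ x, |g x| ≤ a' * |f x| + b' * |h x|) :
    normL2m m f ≤ √2 * (a * normL2m m g + b * normL2m m h) := by
  by_cases hg2 : Integrable fun x => (1 + x ^ 2) ^ m * g x ^ 2
  · exact normL2m_le_of_abs_le_of_integrable ha hb hg2 hh hfgh
  · have hf2 : ¬ Integrable fun x => (1 + x ^ 2) ^ m * f x ^ 2 := fun hf2 =>
      hg2 (integrable_weight_mul_sq_of_abs_le hg hf2 hh hgfh)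
    rw [normL2m, integral_undef hf2, sqrt_zero]
    have := normL2m_nonneg m g
    have := normL2m_nonneg m h
    positivity

end WeightedNorm

lemma integrable_one_add_sq_rpow_mul_exp_neg_mul_sq (r : ℝ) {b : ℝ} (hb : 0 < b) :
    Integrable fun x : ℝ => (1 + x ^ 2) ^ r * exp (-b * x ^ 2) := by
  have hcont : Continuous fun x : ℝ => (1 + x ^ 2) ^ r * exp (-b * x ^ 2) := by
    have := continuous_one_add_sq_rpow r
    fun_prop
  have hsq : Tendsto (fun x : ℝ => 1 + x ^ 2) (cocompact ℝ) atTop := by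
    refine tendsto_atTop_mono (fun x => ?_) (tendsto_norm_cocompact_atTop (E := ℝ))
    rw [norm_eq_abs]
    nlinarith [abs_nonneg x, sq_abs x]
  -- `(1 + x²)^r e^{-b(1+x²)/2} → 0`, leaving a factor `e^{-b x²/2}`
  have hdecay : (fun x : ℝ => (1 + x ^ 2) ^ r * exp (-(b / 2) * (1 + x ^ 2)))
      =O[cocompact ℝ] fun _ => (1 : ℝ) :=
    ((tendsto_rpow_mul_exp_neg_mul_atTop_nhds_zero r (b / 2) (by positivity)).comp hsq).isBigO_one ℝ
  have hO : (fun x : ℝ => (1 + x ^ 2) ^ r * exp (-b * x ^ 2))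
      =O[cocompact ℝ] fun x => exp (-(b / 2) * x ^ 2) := by
    refine ((hdecay.mul (isBigO_refl (fun x : ℝ => exp (-(b / 2) * x ^ 2)) _)).const_mul_left
      (exp (b / 2))).congr (fun x => ?_) (fun x => one_mul _)
    rw [mul_left_comm, mul_assoc, ← exp_add, ← exp_add]
    ring_nf
  exact hcont.locallyIntegrable.integrable_of_isBigO_cocompact hO
    ((integrable_exp_neg_mul_sq (by positivity)).integrableAtFilter _)

lemma hasDerivAt_phi0 (μ ξ : ℝ) : HasDerivAt (phi0 μ) (-(ξ / (2 * μ)) * phi0 μ ξ) ξ := by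
  have h : HasDerivAt (fun ξ : ℝ => -ξ ^ 2 / (4 * μ)) (-(2 * ξ) / (4 * μ)) ξ := by
    simpa using ((hasDerivAt_pow 2 ξ).neg).div_const (4 * μ)
  refine (h.exp.const_mul (√(4 * π * μ))⁻¹).congr_deriv ?_
  unfold phi0
  ring

lemma VN_eq (μ β₀ β₁ ξ τ : ℝ) :
    VN μ β₀ β₁ ξ τ = (β₀ - β₁ * exp (-τ / 2) * ξ / (2 * μ)) * phi0 μ ξ := by
  rw [VN, (hasDerivAt_phi0 μ ξ).deriv]
  ring

lemma phi0_pos {μ : ℝ} (hμ : 0 < μ) (ξ : ℝ) : 0 < phi0 μ ξ := by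
  have := pi_pos
  unfold phi0
  positivity

lemma continuous_phi0 (μ : ℝ) : Continuous (phi0 μ) := by
  unfold phi0
  fun_prop

lemma phi0_eq_mul_exp (μ ξ : ℝ) :
    phi0 μ ξ = (√(4 * π * μ))⁻¹ * exp (-(1 / (4 * μ)) * ξ ^ 2) := by
  unfold phi0
  ring_nf

lemma integrable_phi0 {μ : ℝ} (hμ : 0 < μ) : Integrable (phi0 μ) := by
  exact ((integrable_exp_neg_mul_sq (b := 1 / (4 * μ)) (by positivity)).const_mul
    (√(4 * π * μ))⁻¹).congr (Eventually.of_forall fun ξ => (phi0_eq_mul_exp μ ξ).symm)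

lemma integrable_id_mul_phi0 {μ : ℝ} (hμ : 0 < μ) : Integrable fun ξ => ξ * phi0 μ ξ := by
  have h := (integrable_mul_exp_neg_mul_sq (b := 1 / (4 * μ)) (by positivity)).const_mul
    (√(4 * π * μ))⁻¹
  refine h.congr (Eventually.of_forall fun ξ => ?_)
  simp only [phi0_eq_mul_exp]
  ring

lemma continuous_VN (μ β₀ β₁ τ : ℝ) : Continuous fun ξ => VN μ β₀ β₁ ξ τ := by
  simp only [VN_eq]
  have := continuous_phi0 μ
  fun_prop

lemma integrable_VN {μ : ℝ} (hμ : 0 < μ) (β₀ β₁ τ : ℝ) : Integrable fun ξ => VN μ β₀ β₁ ξ τ := by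
  refine ((integrable_phi0 hμ).const_mul β₀).sub
    ((integrable_id_mul_phi0 hμ).const_mul (β₁ * exp (-τ / 2) / (2 * μ)))
    |>.congr (Eventually.of_forall fun ξ => ?_)
  simp only [VN_eq, Pi.sub_apply]
  ring

noncomputable def envelopeVN (μ β₀ β₁ ξ : ℝ) : ℝ :=
  (|β₀| + |β₁| * |ξ| / (2 * μ)) * phi0 μ ξ

lemma abs_VN_le_envelopeVN {μ : ℝ} (hμ : 0 < μ) (β₀ β₁ ξ : ℝ) {τ : ℝ} (hτ : 0 ≤ τ) :
    |VN μ β₀ β₁ ξ τ| ≤ envelopeVN μ β₀ β₁ ξ := by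
  have hexp : exp (-τ / 2) ≤ 1 := exp_le_one_iff.2 (by linarith)
  rw [VN_eq, envelopeVN, abs_mul, abs_of_pos (phi0_pos hμ ξ)]
  refine mul_le_mul_of_nonneg_right ((abs_sub _ _).trans (add_le_add le_rfl ?_))
    (phi0_pos hμ ξ).le
  rw [abs_div, abs_mul, abs_mul, abs_of_pos (exp_pos _), abs_of_pos (by positivity : 0 < 2 * μ)]
  gcongr
  exact mul_le_of_le_one_right (abs_nonneg _) hexp

lemma integrable_weight_mul_sq_envelopeVN (m : ℝ) {μ : ℝ} (hμ : 0 < μ) (β₀ β₁ : ℝ) :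
    Integrable fun x => (1 + x ^ 2) ^ m * envelopeVN μ β₀ β₁ x ^ 2 := by
  set c := |β₁| / (2 * μ)
  have hdom := (integrable_one_add_sq_rpow_mul_exp_neg_mul_sq (m + 1)
    (b := 1 / (2 * μ)) (by positivity)).const_mul (2 * (β₀ ^ 2 + c ^ 2) * (√(4 * π * μ))⁻¹ ^ 2)
  have hcont : Continuous fun x => (1 + x ^ 2) ^ m * envelopeVN μ β₀ β₁ x ^ 2 := by
    unfold envelopeVN
    have := continuous_phi0 μ
    have := continuous_one_add_sq_rpow m
    fun_prop
  refine hdom.mono' hcont.aestronglyMeasurable (Eventually.of_forall fun x => ?_)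
  have hw : 0 < 1 + x ^ 2 := by positivity
  have hpoly : (|β₀| + c * |x|) ^ 2 ≤ 2 * (β₀ ^ 2 + c ^ 2) * (1 + x ^ 2) := by
    have := add_sq_le (a := |β₀|) (b := c * |x|)
    rw [mul_pow, sq_abs, sq_abs] at this
    nlinarith [sq_nonneg c, sq_nonneg x, sq_nonneg β₀]
  have hphi : phi0 μ x ^ 2 = (√(4 * π * μ))⁻¹ ^ 2 * exp (-(1 / (2 * μ)) * x ^ 2) := by
    rw [phi0_eq_mul_exp, mul_pow, ← exp_nat_mul]
    congr 2
    field_simp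
    ring
  rw [norm_of_nonneg (by positivity), rpow_add_one hw.ne']
  calc (1 + x ^ 2) ^ m * envelopeVN μ β₀ β₁ x ^ 2
      = (1 + x ^ 2) ^ m * (|β₀| + c * |x|) ^ 2 * phi0 μ x ^ 2 := by
        simp only [envelopeVN, c]; ring
    _ ≤ (1 + x ^ 2) ^ m * (2 * (β₀ ^ 2 + c ^ 2) * (1 + x ^ 2)) * phi0 μ x ^ 2 := by gcongr
    _ = _ := by rw [hphi]; ring

lemma abs_add_div_sub_div_le {v ψ F G δ : ℝ} (hδ : 0 < δ) (hF : δ ≤ F) (hG : δ ≤ G) :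
    |(v + ψ) / F - v / G| ≤ 1 / δ * |ψ| + |G - F| / δ ^ 2 * |v| := by
  have hF0 : 0 < F := hδ.trans_le hF
  have hG0 : 0 < G := hδ.trans_le hG
  have hsplit : (v + ψ) / F - v / G = ψ / F + v * (G - F) / (F * G) := by
    field_simp
    ring
  rw [hsplit]
  refine (abs_add_le _ _).trans (add_le_add ?_ ?_)
  · rw [abs_div, abs_of_pos hF0, one_div_mul_eq_div]
    exact div_le_div_of_nonneg_left (abs_nonneg _) hδ hF
  · rw [abs_div, abs_mul, abs_of_pos (mul_pos hF0 hG0), div_mul_eq_mul_div, mul_comm |v|]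
    exact div_le_div_of_nonneg_left (by positivity) (by positivity) (by nlinarith)

lemma abs_le_mul_abs_add_div_sub_div {v ψ F G δ : ℝ} (hδ : 0 < δ) (hF : 0 < F) (hG : δ ≤ G) :
    |ψ| ≤ F * |(v + ψ) / F - v / G| + |G - F| / δ * |v| := by
  have hG0 : 0 < G := hδ.trans_le hG
  have hident : ψ = F * ((v + ψ) / F - v / G) - v * (G - F) / G := by
    field_simp
    ring
  calc |ψ| = |F * ((v + ψ) / F - v / G) - v * (G - F) / G| := congrArg abs hident
    _ ≤ |F * ((v + ψ) / F - v / G)| + |v * (G - F) / G| := abs_sub _ _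
    _ ≤ F * |(v + ψ) / F - v / G| + |G - F| / δ * |v| := by
        rw [abs_mul, abs_of_pos hF, abs_div, abs_mul, abs_of_pos hG0, mul_comm |v|,
          div_mul_eq_mul_div]
        gcongr

section ColeHopf

variable {μ : ℝ}

lemma hasDerivAt_setIntegral_Iio {f : ℝ → ℝ} (hc : Continuous f) (hi : Integrable f) (x : ℝ) :
    HasDerivAt (fun x => ∫ y in Iio x, f y) (f x) x := by
  have heq : (fun x => ∫ y in Iio x, f y) = fun x => (∫ y in Iic 0, f y) + ∫ y in 0..x, f y := by
    funext t
    rw [setIntegral_congr_set Iio_ae_eq_Iic,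
      ← intervalIntegral.integral_Iic_sub_Iic hi.integrableOn hi.integrableOn]
    ring
  rw [heq]
  exact (intervalIntegral.integral_hasDerivAt_right hi.intervalIntegrable
    (hc.stronglyMeasurableAtFilter _ _) hc.continuousAt).const_add _

lemma hasDerivAt_coleHopfDenom {f : ℝ → ℝ} (hc : Continuous f) (hi : Integrable f) (x : ℝ) :
    HasDerivAt (coleHopfDenom μ f) (-(1 / (2 * μ) * f x)) x :=
  ((hasDerivAt_setIntegral_Iio hc hi x).const_mul (1 / (2 * μ))).const_sub 1

lemma coleHopfInv_eq (hμ : μ ≠ 0) {f : ℝ → ℝ} (hc : Continuous f) (hi : Integrable f) {ξ : ℝ}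
    (hne : coleHopfDenom μ f ξ ≠ 0) : coleHopfInv μ f ξ = f ξ / coleHopfDenom μ f ξ := by
  rw [coleHopfInv, ((hasDerivAt_coleHopfDenom hc hi ξ).log hne).deriv]
  field_simp

lemma coleHopfDenom_sub_coleHopfDenom_add {v ψ : ℝ → ℝ} (hv : Integrable v)
    (hψ : Integrable ψ) (x : ℝ) :
    coleHopfDenom μ v x - coleHopfDenom μ (fun y => v y + ψ y) x
      = 1 / (2 * μ) * ∫ y in Iio x, ψ y := by
  rw [coleHopfDenom, coleHopfDenom, integral_add hv.integrableOn hψ.integrableOn]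
  ring

lemma coleHopfDenom_le (hμ : 0 < μ) {f : ℝ → ℝ} (hi : Integrable f) (x : ℝ) :
    coleHopfDenom μ f x ≤ 1 + 1 / (2 * μ) * ∫ y, |f y| := by
  have h : -(∫ y in Iio x, f y) ≤ ∫ y, |f y| :=
    (neg_le_abs _).trans (abs_integral_le_integral_abs.trans
      (setIntegral_le_integral hi.abs (Eventually.of_forall fun _ => abs_nonneg _)))
  have := mul_le_mul_of_nonneg_left h (by positivity : (0 : ℝ) ≤ 1 / (2 * μ))
  rw [coleHopfDenom]
  linarith

end ColeHopf

theorem normL2m_coleHopfInv_add_sub_coleHopfInv_le {m μ δ E : ℝ} (hμ : 0 < μ) (hδ : 0 < δ)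
    {v ψ Q : ℝ → ℝ} (hvc : Continuous v) (hvi : Integrable v) (hψc : Continuous ψ)
    (hψi : Integrable ψ) (hvQ : ∀ x, |v x| ≤ Q x)
    (hQ : Integrable fun x => (1 + x ^ 2) ^ m * Q x ^ 2) (hE : ∀ x, |∫ y in Iio x, ψ y| ≤ E)
    (hF : ∀ x, δ ≤ coleHopfDenom μ (fun y => v y + ψ y) x)
    (hG : ∀ x, δ ≤ coleHopfDenom μ v x) :
    normL2m m (fun ξ => coleHopfInv μ (fun y => v y + ψ y) ξ - coleHopfInv μ v ξ)
      ≤ √2 * (1 / δ * normL2m m ψ + E / (2 * μ * δ ^ 2) * normL2m m Q) := by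
  set F := coleHopfDenom μ (fun y => v y + ψ y)
  set G := coleHopfDenom μ v
  have hF0 : ∀ x, 0 < F x := fun x => hδ.trans_le (hF x)
  have hE0 : 0 ≤ E := (abs_nonneg _).trans (hE 0)
  have hvQ' : ∀ x, |v x| ≤ |Q x| := fun x => (hvQ x).trans (le_abs_self _)
  have hGF : ∀ x, |G x - F x| ≤ E / (2 * μ) := fun x => by
    rw [coleHopfDenom_sub_coleHopfDenom_add hvi hψi, abs_mul, abs_of_pos (by positivity),
      one_div_mul_eq_div]
    gcongr
    exact hE x
  have hw : (fun ξ => coleHopfInv μ (fun y => v y + ψ y) ξ - coleHopfInv μ v ξ)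
      = fun ξ => (v ξ + ψ ξ) / F ξ - v ξ / G ξ := funext fun ξ => by
    rw [coleHopfInv_eq (f := fun y => v y + ψ y) hμ.ne' (hvc.add hψc) (hvi.add hψi) (hF0 ξ).ne',
      coleHopfInv_eq hμ.ne' hvc hvi (hδ.trans_le (hG ξ)).ne']
  rw [hw]
  refine normL2m_le_of_abs_le (a' := 1 + 1 / (2 * μ) * ∫ y, |v y + ψ y|)
    (b' := E / (2 * μ * δ)) (by positivity) (by positivity) hψc.aestronglyMeasurable hQ
    (fun x => ?_) (fun x => ?_)
  · calc |(v x + ψ x) / F x - v x / G x| ≤ 1 / δ * |ψ x| + |G x - F x| / δ ^ 2 * |v x| :=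
          abs_add_div_sub_div_le hδ (hF x) (hG x)
      _ ≤ 1 / δ * |ψ x| + E / (2 * μ) / δ ^ 2 * |Q x| := by
        gcongr 1 / δ * |ψ x| + ?_ / δ ^ 2 * ?_
        exacts [hGF x, hvQ' x]
      _ = 1 / δ * |ψ x| + E / (2 * μ * δ ^ 2) * |Q x| := by rw [div_div]
  · calc |ψ x| ≤ F x * |(v x + ψ x) / F x - v x / G x| + |G x - F x| / δ * |v x| :=
          abs_le_mul_abs_add_div_sub_div hδ (hF0 x) (hG x)
      _ ≤ (1 + 1 / (2 * μ) * ∫ y, |v y + ψ y|) * |(v x + ψ x) / F x - v x / G x|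
          + E / (2 * μ) / δ * |Q x| := by
        gcongr ?_ * _ + ?_ / δ * ?_
        exacts [coleHopfDenom_le hμ (hvi.add hψi) x, hGF x, hvQ' x]
      _ = _ := by rw [div_div]

theorem stmt14_general (μ m β₀ β₁ δN : ℝ) (hμ : 0 < μ) (hδN : 0 < δN)
    (Ψ : ℝ → ℝ → ℝ)
    (hcont : ContinuousOn (fun z : ℝ × ℝ => Ψ z.1 z.2) (Set.univ ×ˢ Set.Ici 0))
    (hint : ∀ τ : ℝ, 0 ≤ τ → Integrable (fun y => Ψ y τ))
    (Cψ : ℝ) (hCψ : 0 < Cψ)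
    (hbound1 : ∀ τ : ℝ, 0 ≤ τ →
      normL2m m (fun ξ => Ψ ξ τ) ≤ Cψ * Real.exp (-τ))
    (hbound2 : ∀ τ : ℝ, 0 ≤ τ → ∀ ξ : ℝ,
      |∫ y in Set.Iio ξ, Ψ y τ| ≤ Cψ * Real.exp (-τ))
    (hlow1 : ∀ ξ : ℝ, ∀ τ : ℝ, 0 ≤ τ →
      δN ≤ 1 - 1 / (2 * μ) * ∫ y in Set.Iio ξ, (VN μ β₀ β₁ y τ + Ψ y τ))
    (hlow2 : ∀ ξ : ℝ, ∀ τ : ℝ, 0 ≤ τ →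
      δN ≤ 1 - 1 / (2 * μ) * ∫ y in Set.Iio ξ, VN μ β₀ β₁ y τ) :
    ∃ Cφ > 0, ∀ τ : ℝ, 0 ≤ τ →
      normL2m m (fun ξ =>
        (-(2 * μ) * deriv (fun x =>
          Real.log (1 - 1 / (2 * μ) * ∫ y in Set.Iio x, (VN μ β₀ β₁ y τ + Ψ y τ))) ξ)
        - (-(2 * μ) * deriv (fun x =>
          Real.log (1 - 1 / (2 * μ) * ∫ y in Set.Iio x, VN μ β₀ β₁ y τ)) ξ))
      ≤ Cφ * Real.exp (-τ) := by
  set K := normL2m m (envelopeVN μ β₀ β₁)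
  have hK : 0 ≤ K := normL2m_nonneg _ _
  refine ⟨√2 * (Cψ / δN + Cψ / (2 * μ * δN ^ 2) * K), by positivity, fun τ hτ => ?_⟩
  have hΨc : Continuous fun ξ => Ψ ξ τ :=
    hcont.comp_continuous (continuous_id.prodMk continuous_const) fun _ => ⟨mem_univ _, hτ⟩
  calc _ ≤ √2 * (1 / δN * normL2m m (fun ξ => Ψ ξ τ)
          + Cψ * exp (-τ) / (2 * μ * δN ^ 2) * K) :=
        normL2m_coleHopfInv_add_sub_coleHopfInv_le hμ hδN (continuous_VN μ β₀ β₁ τ)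
          (integrable_VN hμ β₀ β₁ τ) hΨc (hint τ hτ)
          (fun ξ => abs_VN_le_envelopeVN hμ β₀ β₁ ξ hτ)
          (integrable_weight_mul_sq_envelopeVN m hμ β₀ β₁) (hbound2 τ hτ)
          (fun ξ => hlow1 ξ τ hτ) (fun ξ => hlow2 ξ τ hτ)
    _ ≤ √2 * (1 / δN * (Cψ * exp (-τ)) + Cψ * exp (-τ) / (2 * μ * δN ^ 2) * K) := by
        gcongr
        exact hbound1 τ hτ
    _ = √2 * (Cψ / δN + Cψ / (2 * μ * δN ^ 2) * K) * exp (-τ) := by ring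

/-- Theorem 2, local attractivity: let `w` and `w_N` be obtained from
`V_N + Ψ` and `V_N` by the inverse Cole-Hopf transformation, where `Ψ` satisfies the
stated `O(e^{−τ})` bounds and both denominators are bounded below by `δ_N`. Then there
is `C_φ > 0` with `‖w(·,τ) − w_N(·,τ)‖_{L²(m)} ≤ C_φ e^{−τ}` for all `τ ≥ 0`. -/
theorem stmt14 (μ m β₀ β₁ δN : ℝ) (hμ : 0 < μ) (hm : 3 / 2 < m) (hδN : 0 < δN)
    (Ψ : ℝ → ℝ → ℝ)
    (hcont : ContinuousOn (fun z : ℝ × ℝ => Ψ z.1 z.2) (Set.univ ×ˢ Set.Ici 0))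
    (hint : ∀ τ : ℝ, 0 ≤ τ → Integrable (fun y => Ψ y τ))
    (Cψ : ℝ) (hCψ : 0 < Cψ)
    (hbound1 : ∀ τ : ℝ, 0 ≤ τ →
      normL2m m (fun ξ => Ψ ξ τ) ≤ Cψ * Real.exp (-τ))
    (hbound2 : ∀ τ : ℝ, 0 ≤ τ → ∀ ξ : ℝ,
      |∫ y in Set.Iio ξ, Ψ y τ| ≤ Cψ * Real.exp (-τ))
    (hlow1 : ∀ ξ : ℝ, ∀ τ : ℝ, 0 ≤ τ →
      δN ≤ 1 - 1 / (2 * μ) * ∫ y in Set.Iio ξ, (VN μ β₀ β₁ y τ + Ψ y τ))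
    (hlow2 : ∀ ξ : ℝ, ∀ τ : ℝ, 0 ≤ τ →
      δN ≤ 1 - 1 / (2 * μ) * ∫ y in Set.Iio ξ, VN μ β₀ β₁ y τ) :
    ∃ Cφ > 0, ∀ τ : ℝ, 0 ≤ τ →
      normL2m m (fun ξ =>
        (-(2 * μ) * deriv (fun x =>
          Real.log (1 - 1 / (2 * μ) * ∫ y in Set.Iio x, (VN μ β₀ β₁ y τ + Ψ y τ))) ξ)
        - (-(2 * μ) * deriv (fun x =>
          Real.log (1 - 1 / (2 * μ) * ∫ y in Set.Iio x, VN μ β₀ β₁ y τ)) ξ))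
      ≤ Cφ * Real.exp (-τ) :=
  stmt14_general μ m β₀ β₁ δN hμ hδN Ψ hcont hint Cψ hCψ hbound1 hbound2 hlow1 hlow2
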